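/- arXiv:2510.02242 — 3 statements merged into one kernel-verified Lean document; each statement's English description precedes it below -/
import Mathlib

section
/- Let X, Y, Z be Hilbert spaces and T : X → Y, S : Y → Z compact operators. Then for all j, k ≥ 1, the singular values satisfy σ_{j+k-1}(S ∘ T) ≤ σ_j(S) σ_k(T). -/
open Set

/-- The `k`-th singular value (equivalently, approximation number) of an operator between
Hilbert spaces: the distance of `T` to the operators of rank `< k`.  For compact operators
on Hilbert spaces this coincides with the `k`-th largest eigenvalue of `(T*T)^{1/2}`. -/
noncomputable def singularValue {X Y : Type*} [NormedAddCommGroup X] [InnerProductSpace ℝ X]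
    [NormedAddCommGroup Y] [InnerProductSpace ℝ Y] (k : ℕ) (T : X →L[ℝ] Y) : ℝ :=
  sInf {c : ℝ | ∃ F : X →L[ℝ] Y,
    FiniteDimensional ℝ (LinearMap.range (F : X →ₗ[ℝ] Y)) ∧
    Module.finrank ℝ (LinearMap.range (F : X →ₗ[ℝ] Y)) < k ∧ ‖T - F‖ = c}

namespace SingularValueAux

variable {X Y : Type*} [NormedAddCommGroup X] [InnerProductSpace ℝ X]
  [NormedAddCommGroup Y] [InnerProductSpace ℝ Y]

/-- The defining set of `singularValue`. -/
def svSet (k : ℕ) (T : X →L[ℝ] Y) : Set ℝ :=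
  {c : ℝ | ∃ F : X →L[ℝ] Y,
    FiniteDimensional ℝ (LinearMap.range (F : X →ₗ[ℝ] Y)) ∧
    Module.finrank ℝ (LinearMap.range (F : X →ₗ[ℝ] Y)) < k ∧ ‖T - F‖ = c}

lemma singularValue_eq (k : ℕ) (T : X →L[ℝ] Y) : singularValue k T = sInf (svSet k T) := rfl

lemma svSet_nonempty {k : ℕ} (hk : 1 ≤ k) (T : X →L[ℝ] Y) : (svSet k T).Nonempty := by
  refine ⟨‖T - 0‖, 0, ?_, ?_, rfl⟩
  · rw [ContinuousLinearMap.coe_zero, LinearMap.range_zero]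
    infer_instance
  · rw [ContinuousLinearMap.coe_zero, LinearMap.range_zero, finrank_bot]
    omega

lemma svSet_bddBelow (k : ℕ) (T : X →L[ℝ] Y) : BddBelow (svSet k T) := by
  refine ⟨0, fun c hc => ?_⟩
  obtain ⟨F, _, _, hF⟩ := hc
  exact hF ▸ norm_nonneg _

lemma singularValue_nonneg {k : ℕ} (hk : 1 ≤ k) (T : X →L[ℝ] Y) : 0 ≤ singularValue k T :=
  le_csInf (svSet_nonempty hk T) fun c hc => by
    obtain ⟨F, _, _, hF⟩ := hc; exact hF ▸ norm_nonneg _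

end SingularValueAux

open SingularValueAux in
/-- Multiplicativity of singular values of compact operators between Hilbert spaces:
`σ_{j+k-1}(S ∘ T) ≤ σ_j(S) σ_k(T)` for all `j, k ≥ 1`. -/
theorem singularValue_comp_le {X Y Z : Type*}
    [NormedAddCommGroup X] [InnerProductSpace ℝ X] [CompleteSpace X]
    [NormedAddCommGroup Y] [InnerProductSpace ℝ Y] [CompleteSpace Y]
    [NormedAddCommGroup Z] [InnerProductSpace ℝ Z] [CompleteSpace Z]
    (T : X →L[ℝ] Y) (S : Y →L[ℝ] Z)
    (hT : IsCompactOperator (⇑T)) (hS : IsCompactOperator (⇑S))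
    (j k : ℕ) (hj : 1 ≤ j) (hk : 1 ≤ k) :
    singularValue (j + k - 1) (S.comp T) ≤ singularValue j S * singularValue k T := by
  set a := singularValue j S with ha
  set b := singularValue k T with hb
  have ha0 : 0 ≤ a := singularValue_nonneg hj S
  have hb0 : 0 ≤ b := singularValue_nonneg hk T
  -- key estimate for individual approximants
  have key : ∀ cF ∈ svSet j S, ∀ cG ∈ svSet k T,
      singularValue (j + k - 1) (S.comp T) ≤ cF * cG := by
    rintro cF ⟨F, hFfin, hFrk, rfl⟩ cG ⟨G, hGfin, hGrk, rfl⟩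
    set H : X →L[ℝ] Z := F.comp T + (S - F).comp G with hH
    have hdiff : S.comp T - H = (S - F).comp (T - G) := by
      ext x
      simp [hH, ContinuousLinearMap.sub_apply, ContinuousLinearMap.comp_apply,
        ContinuousLinearMap.add_apply, map_sub]
      abel
    set R : Submodule ℝ Z :=
      LinearMap.range (F : Y →ₗ[ℝ] Z) ⊔
        Submodule.map ((S - F : Y →L[ℝ] Z) : Y →ₗ[ℝ] Z) (LinearMap.range (G : X →ₗ[ℝ] Y))
      with hR
    haveI : FiniteDimensional ℝ
        (Submodule.map ((S - F : Y →L[ℝ] Z) : Y →ₗ[ℝ] Z) (LinearMap.range (G : X →ₗ[ℝ] Y))) :=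
      Module.Finite.map _ _
    haveI hRfin : FiniteDimensional ℝ R := by
      rw [hR]; infer_instance
    have hle : LinearMap.range (H : X →ₗ[ℝ] Z) ≤ R := by
      rintro z ⟨x, rfl⟩
      have : (H : X →ₗ[ℝ] Z) x = F (T x) + (S - F) (G x) := by
        simp [hH, ContinuousLinearMap.comp_apply]
      rw [this]
      exact Submodule.add_mem_sup ⟨T x, rfl⟩ (Submodule.mem_map_of_mem ⟨x, rfl⟩)
    haveI : FiniteDimensional ℝ (LinearMap.range (H : X →ₗ[ℝ] Z)) :=
      Submodule.finiteDimensional_of_le hle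
    have hrk : Module.finrank ℝ (LinearMap.range (H : X →ₗ[ℝ] Z)) < j + k - 1 := by
      have h1 : Module.finrank ℝ (LinearMap.range (H : X →ₗ[ℝ] Z)) ≤ Module.finrank ℝ R :=
        Submodule.finrank_mono hle
      have h2 : Module.finrank ℝ R ≤
          Module.finrank ℝ (LinearMap.range (F : Y →ₗ[ℝ] Z)) +
            Module.finrank ℝ (Submodule.map ((S - F : Y →L[ℝ] Z) : Y →ₗ[ℝ] Z)
              (LinearMap.range (G : X →ₗ[ℝ] Y))) :=
        Submodule.finrank_add_le_finrank_add_finrank _ _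
      have h3 : Module.finrank ℝ (Submodule.map ((S - F : Y →L[ℝ] Z) : Y →ₗ[ℝ] Z)
            (LinearMap.range (G : X →ₗ[ℝ] Y))) ≤
          Module.finrank ℝ (LinearMap.range (G : X →ₗ[ℝ] Y)) :=
        Submodule.finrank_map_le _ _
      omega
    have hmem : ‖S.comp T - H‖ ∈ svSet (j + k - 1) (S.comp T) := ⟨H, ‹_›, hrk, rfl⟩
    calc singularValue (j + k - 1) (S.comp T) ≤ ‖S.comp T - H‖ :=
          csInf_le (svSet_bddBelow _ _) hmem
      _ = ‖(S - F).comp (T - G)‖ := by rw [hdiff]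
      _ ≤ ‖S - F‖ * ‖T - G‖ := ContinuousLinearMap.opNorm_comp_le _ _
  -- pass to the infimum
  have hεbound : ∀ ε : ℝ, 0 < ε →
      singularValue (j + k - 1) (S.comp T) ≤ (a + ε) * (b + ε) := by
    intro ε hε
    obtain ⟨cF, hcF, hcFlt⟩ := Real.lt_sInf_add_pos (svSet_nonempty hj S) hε
    obtain ⟨cG, hcG, hcGlt⟩ := Real.lt_sInf_add_pos (svSet_nonempty hk T) hε
    have hcF0 : 0 ≤ cF := by obtain ⟨F, _, _, h⟩ := hcF; exact h ▸ norm_nonneg _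
    have hcG0 : 0 ≤ cG := by obtain ⟨G, _, _, h⟩ := hcG; exact h ▸ norm_nonneg _
    calc singularValue (j + k - 1) (S.comp T) ≤ cF * cG := key cF hcF cG hcG
      _ ≤ (a + ε) * (b + ε) := by
          apply mul_le_mul hcFlt.le hcGlt.le hcG0
          positivity
  have htend : Filter.Tendsto (fun ε : ℝ => (a + ε) * (b + ε)) (nhdsWithin 0 (Set.Ioi 0))
      (nhds (a * b)) := by
    have : Filter.Tendsto (fun ε : ℝ => (a + ε) * (b + ε)) (nhds 0) (nhds ((a + 0) * (b + 0))) :=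
      ((continuous_const.add continuous_id).mul (continuous_const.add continuous_id)).tendsto 0
    simpa using this.mono_left nhdsWithin_le_nhds
  refine ge_of_tendsto htend ?_
  filter_upwards [self_mem_nhdsWithin] with ε hεpos
  exact hεbound ε hεpos
end

section
/- Let μ > 0 and suppose a nonincreasing sequence of positive reals (σ_k) satisfies σ_k ≤ C e^{-c L k^μ} for constants C, c, L > 0. Assume the entropy-number interpolation inequality e_N ≤ C₁ sup_{k≥1} e^{-c₁ N / k}(σ_1⋯σ_k)^{1/k}. Then e_N ≤ C̃ exp(-c̃ L^{1/(μ+1)} N^{μ/(μ+1)}) for all N ≥ 1, with C̃, c̃ depending on μ, C, c, C₁, c₁ but not on L. -/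
open Finset Real

/-- Weighted AM–GM consequence: `a^(μ/(μ+1)) * b^(1/(μ+1)) ≤ a + b`. -/
lemma amgm_aux (μ a b : ℝ) (hμ : 0 < μ) (ha : 0 ≤ a) (hb : 0 ≤ b) :
    a ^ (μ / (μ + 1)) * b ^ ((1 : ℝ) / (μ + 1)) ≤ a + b := by
  have hμ1 : 0 < μ + 1 := by linarith
  have hw : μ / (μ + 1) + 1 / (μ + 1) = 1 := by field_simp
  have h := Real.geom_mean_le_arith_mean2_weighted
    (by positivity : (0:ℝ) ≤ μ / (μ + 1)) (by positivity : (0:ℝ) ≤ 1 / (μ + 1)) ha hb hw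
  have h1 : μ / (μ + 1) ≤ 1 := by
    rw [div_le_one hμ1]; linarith
  have h2 : 1 / (μ + 1) ≤ 1 := by
    rw [div_le_one hμ1]; linarith
  nlinarith [mul_le_mul_of_nonneg_right h1 ha, mul_le_mul_of_nonneg_right h2 hb]

/-- Lower bound for the power sum: `(k/2)^(μ+1) ≤ ∑_{j=1}^k j^μ`. -/
lemma sum_rpow_lower (μ : ℝ) (hμ : 0 < μ) (k : ℕ) (hk : 1 ≤ k) :
    ((k : ℝ) / 2) ^ (μ + 1) ≤ ∑ j ∈ Finset.Icc 1 k, (j : ℝ) ^ μ := by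
  set m : ℕ := (k + 1) / 2 with hm
  have hm1 : 1 ≤ m := by omega
  have hmk : m ≤ k := by omega
  have hk2m : (k : ℝ) ≤ 2 * m := by
    have : k ≤ 2 * m := by omega
    exact_mod_cast this
  have hkpos : (0:ℝ) < k := by exact_mod_cast hk
  have hhalf : (k : ℝ) / 2 ≤ m := by linarith
  have hhalfpos : (0:ℝ) < (k:ℝ) / 2 := by positivity
  -- each term in Icc m k is at least (k/2)^μ
  have hterm : ∀ j ∈ Finset.Icc m k, ((k:ℝ)/2) ^ μ ≤ (j : ℝ) ^ μ := by
    intro j hj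
    rw [Finset.mem_Icc] at hj
    have : ((k:ℝ)/2) ≤ (j : ℝ) := le_trans hhalf (by exact_mod_cast hj.1)
    exact Real.rpow_le_rpow hhalfpos.le this hμ.le
  have hcard : (Finset.Icc m k).card = k + 1 - m := Nat.card_Icc m k
  have hsum1 : (Finset.Icc m k).card • (((k:ℝ)/2) ^ μ) ≤ ∑ j ∈ Finset.Icc m k, (j : ℝ) ^ μ :=
    Finset.card_nsmul_le_sum _ _ _ hterm
  have hsub : ∑ j ∈ Finset.Icc m k, (j : ℝ) ^ μ ≤ ∑ j ∈ Finset.Icc 1 k, (j : ℝ) ^ μ := by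
    apply Finset.sum_le_sum_of_subset_of_nonneg
    · intro j hj
      rw [Finset.mem_Icc] at hj ⊢
      omega
    · intro j _ _
      positivity
  have hcardR : (k : ℝ) / 2 ≤ ((k + 1 - m : ℕ) : ℝ) := by
    have h1 : (k : ℝ) / 2 ≤ (k : ℝ) + 1 - m := by
      have : (m : ℝ) ≤ ((k:ℝ) + 1) / 2 := by
        have : 2 * m ≤ k + 1 := by omega
        have := (by exact_mod_cast this : (2:ℝ) * m ≤ (k:ℝ) + 1)
        linarith
      linarith
    have h2 : ((k + 1 - m : ℕ) : ℝ) = (k : ℝ) + 1 - m := by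
      have : m ≤ k + 1 := by omega
      push_cast [Nat.cast_sub this]
      ring
    linarith [h2 ▸ h1]
  calc ((k : ℝ) / 2) ^ (μ + 1) = ((k:ℝ)/2) ^ μ * ((k:ℝ)/2) := by
        rw [Real.rpow_add hhalfpos, Real.rpow_one]
    _ ≤ ((k:ℝ)/2) ^ μ * ((k + 1 - m : ℕ) : ℝ) := by
        apply mul_le_mul_of_nonneg_left hcardR (by positivity)
    _ = (Finset.Icc m k).card • (((k:ℝ)/2) ^ μ) := by
        rw [hcard, nsmul_eq_mul]; ring
    _ ≤ ∑ j ∈ Finset.Icc m k, (j : ℝ) ^ μ := hsum1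
    _ ≤ ∑ j ∈ Finset.Icc 1 k, (j : ℝ) ^ μ := hsub

/-- From singular value decay `σ_k ≤ C e^{-cLk^μ}` and Carl's interpolation inequality
`e_N ≤ C₁ sup_{k≥1} e^{-c₁N/k}(σ_1⋯σ_k)^{1/k}` one obtains the entropy bound
`e_N ≤ C̃ exp(-c̃ L^{1/(μ+1)} N^{μ/(μ+1)})` with `C̃, c̃` independent of `L`. -/
theorem entropy_bound_of_singular_value_decay
    (μ C c C₁ c₁ : ℝ) (hμ : 0 < μ) (hC : 0 < C) (hc : 0 < c) (hC₁ : 0 < C₁) (hc₁ : 0 < c₁) :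
    ∃ Ct ct : ℝ, 0 < Ct ∧ 0 < ct ∧
      ∀ L > (0 : ℝ), ∀ σ e : ℕ → ℝ,
        (∀ k, 1 ≤ k → 0 < σ k) →
        (∀ k l : ℕ, 1 ≤ k → k ≤ l → σ l ≤ σ k) →
        (∀ k : ℕ, 1 ≤ k → σ k ≤ C * Real.exp (-c * L * (k : ℝ) ^ μ)) →
        (∀ N : ℕ, 1 ≤ N →
          e N ≤ C₁ * ⨆ k : {k : ℕ // 1 ≤ k},
            Real.exp (-c₁ * (N : ℝ) / (k : ℕ)) *
              (∏ j ∈ Finset.Icc 1 (k : ℕ), σ j) ^ ((1 : ℝ) / (k : ℕ))) →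
        ∀ N : ℕ, 1 ≤ N →
          e N ≤ Ct * Real.exp (-ct * L ^ ((1 : ℝ) / (μ + 1)) * (N : ℝ) ^ (μ / (μ + 1))) := by
  have hμ1 : (0:ℝ) < μ + 1 := by linarith
  have h2pos : (0:ℝ) < (2:ℝ) ^ (μ + 1) := Real.rpow_pos_of_pos (by norm_num) _
  set c' : ℝ := c / (2:ℝ) ^ (μ + 1) with hc'def
  have hc' : 0 < c' := div_pos hc h2pos
  refine ⟨C₁ * C, min c₁ c', by positivity, lt_min hc₁ hc', ?_⟩
  intro L hL σ e hσpos hσmono hσbound hCarl N hN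
  set ct := min c₁ c' with hctdef
  have hct : 0 < ct := lt_min hc₁ hc'
  have hNpos : (0:ℝ) < N := by exact_mod_cast hN
  set B : ℝ := Real.exp (-ct * L ^ ((1 : ℝ) / (μ + 1)) * (N : ℝ) ^ (μ / (μ + 1))) with hB
  -- bound each term of the supremum
  have key : ∀ k : ℕ, 1 ≤ k →
      Real.exp (-c₁ * (N : ℝ) / (k : ℕ)) *
        (∏ j ∈ Finset.Icc 1 (k : ℕ), σ j) ^ ((1 : ℝ) / (k : ℕ)) ≤ C * B := by
    intro k hk
    have hkpos : (0:ℝ) < k := by exact_mod_cast hk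
    set S : ℝ := ∑ j ∈ Finset.Icc 1 k, (j : ℝ) ^ μ with hS
    have hprodpos : 0 < ∏ j ∈ Finset.Icc 1 k, σ j := by
      apply Finset.prod_pos
      intro j hj
      exact hσpos j (Finset.mem_Icc.mp hj).1
    have hprod : ∏ j ∈ Finset.Icc 1 k, σ j ≤ C ^ k * Real.exp (-(c * L) * S) := by
      have h1 : ∏ j ∈ Finset.Icc 1 k, σ j
          ≤ ∏ j ∈ Finset.Icc 1 k, (C * Real.exp (-c * L * (j : ℝ) ^ μ)) := by
        apply Finset.prod_le_prod
        · intro j hj; exact (hσpos j (Finset.mem_Icc.mp hj).1).le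
        · intro j hj; exact hσbound j (Finset.mem_Icc.mp hj).1
      have h2 : ∏ j ∈ Finset.Icc 1 k, (C * Real.exp (-c * L * (j : ℝ) ^ μ))
          = C ^ k * Real.exp (-(c * L) * S) := by
        rw [Finset.prod_mul_distrib, Finset.prod_const, Nat.card_Icc,
          Nat.add_sub_cancel, ← Real.exp_sum]
        rw [hS, Finset.mul_sum]
        exact congrArg (C ^ k * Real.exp ·) (Finset.sum_congr rfl fun j _ => by ring)
      linarith [h2 ▸ h1]
    -- raise to power 1/k
    have hpow : (∏ j ∈ Finset.Icc 1 k, σ j) ^ ((1 : ℝ) / (k : ℕ))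
        ≤ C * Real.exp (-(c * L) * S / k) := by
      have h1 : (∏ j ∈ Finset.Icc 1 k, σ j) ^ ((1 : ℝ) / (k : ℕ))
          ≤ (C ^ k * Real.exp (-(c * L) * S)) ^ ((1 : ℝ) / (k : ℕ)) :=
        Real.rpow_le_rpow hprodpos.le hprod (by positivity)
      have h2 : (C ^ k * Real.exp (-(c * L) * S)) ^ ((1 : ℝ) / (k : ℕ))
          = C * Real.exp (-(c * L) * S / k) := by
        rw [Real.mul_rpow (by positivity) (Real.exp_pos _).le]
        congr 1
        · rw [← Real.rpow_natCast C k, ← Real.rpow_mul hC.le, mul_one_div,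
            div_self (ne_of_gt hkpos), Real.rpow_one]
        · rw [← Real.exp_mul, mul_one_div]
      linarith [h2 ▸ h1]
    -- bound S/k from below
    have hSk : (k:ℝ) ^ μ / (2:ℝ) ^ (μ + 1) ≤ S / k := by
      have h1 : ((k : ℝ) / 2) ^ (μ + 1) ≤ S := sum_rpow_lower μ hμ k hk
      have h2 : ((k : ℝ) / 2) ^ (μ + 1) = (k:ℝ) ^ (μ + 1) / (2:ℝ) ^ (μ + 1) :=
        Real.div_rpow hkpos.le (by norm_num : (0:ℝ) ≤ 2) (μ + 1)
      have h3 : (k:ℝ) ^ (μ + 1) = (k:ℝ) ^ μ * k := by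
        rw [Real.rpow_add hkpos, Real.rpow_one]
      rw [le_div_iff₀ hkpos]
      calc (k:ℝ) ^ μ / (2:ℝ) ^ (μ + 1) * k = (k:ℝ) ^ (μ + 1) / (2:ℝ) ^ (μ + 1) := by
            rw [h3]; ring
        _ = ((k:ℝ) / 2) ^ (μ + 1) := h2.symm
        _ ≤ S := h1
    -- exponent comparison
    have hexp : -c₁ * (N:ℝ) / k + -(c * L) * S / k
        ≤ -ct * L ^ ((1 : ℝ) / (μ + 1)) * (N : ℝ) ^ (μ / (μ + 1)) := by
      have hcLS : c' * L * (k:ℝ) ^ μ ≤ c * L * S / k := by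
        have := mul_le_mul_of_nonneg_left hSk (by positivity : (0:ℝ) ≤ c * L)
        calc c' * L * (k:ℝ) ^ μ = c * L * ((k:ℝ) ^ μ / (2:ℝ) ^ (μ + 1)) := by
              rw [hc'def]; ring
          _ ≤ c * L * (S / k) := this
          _ = c * L * S / k := by ring
      have hamgm : (N:ℝ) ^ (μ / (μ + 1)) * L ^ ((1:ℝ) / (μ + 1))
          ≤ (N:ℝ) / k + L * (k:ℝ) ^ μ := by
        have h := amgm_aux μ ((N:ℝ)/k) (L * (k:ℝ)^μ) hμ (by positivity) (by positivity)
        have heq : ((N:ℝ)/k) ^ (μ / (μ + 1)) * (L * (k:ℝ)^μ) ^ ((1:ℝ) / (μ + 1))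
            = (N:ℝ) ^ (μ / (μ + 1)) * L ^ ((1:ℝ) / (μ + 1)) := by
          have hkθ : ((k:ℝ) ^ (μ / (μ + 1))) ≠ 0 :=
            ne_of_gt (Real.rpow_pos_of_pos hkpos _)
          rw [Real.div_rpow hNpos.le hkpos.le, Real.mul_rpow hL.le (by positivity),
            ← Real.rpow_mul hkpos.le, mul_one_div]
          field_simp
        rw [heq] at h
        exact h
      have h1 : ct * ((N:ℝ) ^ (μ / (μ + 1)) * L ^ ((1:ℝ) / (μ + 1)))
          ≤ ct * ((N:ℝ) / k + L * (k:ℝ) ^ μ) :=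
        mul_le_mul_of_nonneg_left hamgm hct.le
      have h2 : ct * ((N:ℝ) / k) ≤ c₁ * ((N:ℝ) / k) :=
        mul_le_mul_of_nonneg_right (min_le_left _ _) (by positivity)
      have h3 : ct * (L * (k:ℝ) ^ μ) ≤ c' * (L * (k:ℝ) ^ μ) :=
        mul_le_mul_of_nonneg_right (min_le_right _ _) (by positivity)
      have h4 : c' * (L * (k:ℝ)^μ) ≤ c * L * S / k := by
        calc c' * (L * (k:ℝ)^μ) = c' * L * (k:ℝ)^μ := by ring
          _ ≤ c * L * S / k := hcLS
      have e1 : -c₁ * (N:ℝ) / k = -(c₁ * ((N:ℝ)/k)) := by ring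
      have e2 : -(c * L) * S / k = -(c * L * S / k) := by ring
      have e3 : -ct * L ^ ((1:ℝ)/(μ+1)) * (N:ℝ) ^ (μ/(μ+1))
          = -(ct * ((N:ℝ) ^ (μ/(μ+1)) * L ^ ((1:ℝ)/(μ+1)))) := by ring
      rw [e1, e2, e3]
      linarith [h1, h2, h3, h4]
    -- combine
    calc Real.exp (-c₁ * (N : ℝ) / (k : ℕ)) *
          (∏ j ∈ Finset.Icc 1 (k : ℕ), σ j) ^ ((1 : ℝ) / (k : ℕ))
        ≤ Real.exp (-c₁ * (N : ℝ) / k) * (C * Real.exp (-(c * L) * S / k)) := by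
          apply mul_le_mul_of_nonneg_left hpow (Real.exp_pos _).le
      _ = C * Real.exp (-c₁ * (N:ℝ) / k + -(c * L) * S / k) := by
          rw [Real.exp_add]; ring
      _ ≤ C * B := by
          rw [hB]
          exact mul_le_mul_of_nonneg_left (Real.exp_le_exp.mpr hexp) hC.le
  -- sup bound
  have hsup : (⨆ k : {k : ℕ // 1 ≤ k},
      Real.exp (-c₁ * (N : ℝ) / (k : ℕ)) *
        (∏ j ∈ Finset.Icc 1 (k : ℕ), σ j) ^ ((1 : ℝ) / (k : ℕ))) ≤ C * B := by
    have : Nonempty {k : ℕ // 1 ≤ k} := ⟨⟨1, le_refl 1⟩⟩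
    exact ciSup_le fun ⟨k, hk⟩ => key k hk
  calc e N ≤ C₁ * ⨆ k : {k : ℕ // 1 ≤ k},
        Real.exp (-c₁ * (N : ℝ) / (k : ℕ)) *
          (∏ j ∈ Finset.Icc 1 (k : ℕ), σ j) ^ ((1 : ℝ) / (k : ℕ)) := hCarl N hN
    _ ≤ C₁ * (C * B) := mul_le_mul_of_nonneg_left hsup hC₁.le
    _ = C₁ * C * B := by ring
end

section
/- Let μ_l ~ l^{2/n} and j_m ~ m (in the sense that c l^{2/n} ≤ μ_l ≤ C l^{2/n} and c m ≤ j_m ≤ C m), and let R > 0. Define λ_{l,m} = μ_l + j_m²/R². Then the number of pairs (l,m) with λ_{l,m} ≤ N is comparable to R N^{(n+1)/2} for N sufficiently large; consequently, the nondecreasing rearrangement (λ_k) of (λ_{l,m}) satisfies λ_k ~ R^{-2/(n+1)} k^{2/(n+1)}. -/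
open Set Real

lemma half_le_floor {x : ℝ} (hx : 1 ≤ x) : x / 2 ≤ (⌊x⌋₊ : ℝ) := by
  have h1 : (1 : ℕ) ≤ ⌊x⌋₊ := Nat.le_floor (by exact_mod_cast hx)
  have h1' : (1:ℝ) ≤ (⌊x⌋₊ : ℝ) := by exact_mod_cast h1
  have h2 := Nat.lt_floor_add_one x
  linarith

set_option maxHeartbeats 1000000 in
lemma count_bounds (n : ℕ) (hn : 1 ≤ n) (c C : ℝ) (hc : 0 < c) (hC : 0 < C)
    (R : ℝ) (hR : 0 < R) (μ j : ℕ → ℝ)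
    (hμ : ∀ l : ℕ, 1 ≤ l → c * (l : ℝ) ^ ((2 : ℝ) / n) ≤ μ l ∧ μ l ≤ C * (l : ℝ) ^ ((2 : ℝ) / n))
    (hj : ∀ m : ℕ, 1 ≤ m → c * (m : ℝ) ≤ j m ∧ j m ≤ C * (m : ℝ)) :
    ∀ N : ℝ, max 1 (max (2*C) (2*C^2/R^2)) ≤ N →
      ((2*C) ^ (-((n:ℝ)/2)) * (2:ℝ) ^ (-(1/2 : ℝ)) / (4*C)) * R * N ^ (((n : ℝ) + 1) / 2)
          ≤ (Nat.card {p : ℕ × ℕ | 1 ≤ p.1 ∧ 1 ≤ p.2 ∧ μ p.1 + (j p.2) ^ 2 / R ^ 2 ≤ N} : ℝ) ∧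
        (Nat.card {p : ℕ × ℕ | 1 ≤ p.1 ∧ 1 ≤ p.2 ∧ μ p.1 + (j p.2) ^ 2 / R ^ 2 ≤ N} : ℝ)
          ≤ (c ^ (-((n:ℝ)/2)) / c) * R * N ^ (((n : ℝ) + 1) / 2) := by
  intro N hN
  have hN1 : (1:ℝ) ≤ N := le_trans (le_max_left _ _) hN
  have hN2 : 2*C ≤ N := le_trans (le_trans (le_max_left _ _) (le_max_right _ _)) hN
  have hN3 : 2*C^2/R^2 ≤ N := le_trans (le_trans (le_max_right _ _) (le_max_right _ _)) hN
  have hN0 : (0:ℝ) < N := by linarith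
  have hnR : (0:ℝ) < (n:ℝ) := by exact_mod_cast hn
  have hnne : (n:ℝ) ≠ 0 := ne_of_gt hnR
  have hexp : (2:ℝ)/n * ((n:ℝ)/2) = 1 := by field_simp
  have hexp' : (n:ℝ)/2 * ((2:ℝ)/n) = 1 := by field_simp
  set S : Set (ℕ × ℕ) := {p : ℕ × ℕ | 1 ≤ p.1 ∧ 1 ≤ p.2 ∧ μ p.1 + (j p.2) ^ 2 / R ^ 2 ≤ N}
    with hS
  -- upper bound
  set L : ℕ := ⌊(N/c) ^ ((n:ℝ)/2)⌋₊ with hL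
  set M : ℕ := ⌊Real.sqrt N * R / c⌋₊ with hM
  have hsub : S ⊆ ↑(Finset.Icc 1 L ×ˢ Finset.Icc 1 M) := by
    rintro ⟨l, m⟩ ⟨h1, h2, h3⟩
    have hμl := hμ l h1
    have hjm := hj m h2
    have hlpos : (0:ℝ) ≤ (l:ℝ) := Nat.cast_nonneg l
    have hjnn : (0:ℝ) ≤ j m := by
      have : (0:ℝ) < c * m := by
        have : (1:ℝ) ≤ (m:ℝ) := by exact_mod_cast h2
        nlinarith
      linarith [hjm.1]
    have hsq : (0:ℝ) ≤ (j m)^2 / R^2 := by positivity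
    have hμnn : (0:ℝ) ≤ μ l := by
      have : (0:ℝ) ≤ c * (l:ℝ) ^ ((2:ℝ)/n) := by positivity
      linarith [hμl.1]
    -- l bound
    have hlle : (l:ℝ) ≤ (N/c) ^ ((n:ℝ)/2) := by
      have h4 : c * (l:ℝ) ^ ((2:ℝ)/n) ≤ N := by dsimp at h3; linarith [hμl.1]
      have h5 : (l:ℝ) ^ ((2:ℝ)/n) ≤ N / c := by
        rw [le_div_iff₀ hc]; linarith
      calc (l:ℝ) = ((l:ℝ) ^ ((2:ℝ)/n)) ^ ((n:ℝ)/2) := by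
            rw [← Real.rpow_mul hlpos, hexp, Real.rpow_one]
        _ ≤ (N/c) ^ ((n:ℝ)/2) := Real.rpow_le_rpow (by positivity) h5 (by positivity)
    -- m bound
    have hmle : (m:ℝ) ≤ Real.sqrt N * R / c := by
      have h4 : (j m)^2 / R^2 ≤ N := by dsimp at h3; linarith
      have h5 : (j m)^2 ≤ N * R^2 := by
        rw [div_le_iff₀ (by positivity)] at h4; linarith
      have h6 : (c * (m:ℝ))^2 ≤ N * R^2 :=
        le_trans (pow_le_pow_left₀ (by positivity) hjm.1 2) h5
      have h7 : c * (m:ℝ) ≤ Real.sqrt (N * R^2) :=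
        (Real.le_sqrt (by positivity) (by positivity)).mpr h6
      rw [Real.sqrt_mul hN0.le, Real.sqrt_sq hR.le] at h7
      rw [le_div_iff₀ hc]; linarith
    simp only [Finset.coe_product, Set.mem_prod, Finset.mem_coe, Finset.mem_Icc]
    exact ⟨⟨h1, Nat.le_floor hlle⟩, ⟨h2, Nat.le_floor hmle⟩⟩
  have hSfin : S.Finite := Set.Finite.subset (Finset.finite_toSet _) hsub
  have hcardU : Nat.card S ≤ L * M := by
    rw [Nat.card_coe_set_eq]
    calc S.ncard ≤ ((Finset.Icc 1 L ×ˢ Finset.Icc 1 M : Finset (ℕ×ℕ)) : Set (ℕ×ℕ)).ncard :=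
          Set.ncard_le_ncard hsub (Finset.finite_toSet _)
      _ = L * M := by
          rw [Set.ncard_coe_finset, Finset.card_product, Nat.card_Icc, Nat.card_Icc]
          simp
  have hNsplit : N ^ (((n:ℝ)+1)/2) = N ^ ((n:ℝ)/2) * N ^ ((1:ℝ)/2) := by
    rw [← Real.rpow_add hN0]; ring_nf
  have hupper : (Nat.card S : ℝ) ≤ (c ^ (-((n:ℝ)/2)) / c) * R * N ^ (((n : ℝ) + 1) / 2) := by
    have h8 : (Nat.card S : ℝ) ≤ (L:ℝ) * (M:ℝ) := by exact_mod_cast hcardU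
    have h9 : (L:ℝ) ≤ (N/c) ^ ((n:ℝ)/2) := Nat.floor_le (by positivity)
    have h10 : (M:ℝ) ≤ Real.sqrt N * R / c := Nat.floor_le (by positivity)
    have h11 : (L:ℝ) * (M:ℝ) ≤ (N/c) ^ ((n:ℝ)/2) * (Real.sqrt N * R / c) :=
      mul_le_mul h9 h10 (Nat.cast_nonneg _) (by positivity)
    have h12 : (N/c) ^ ((n:ℝ)/2) * (Real.sqrt N * R / c)
        = (c ^ (-((n:ℝ)/2)) / c) * R * N ^ (((n : ℝ) + 1) / 2) := by
      rw [Real.sqrt_eq_rpow, Real.div_rpow hN0.le hc.le, Real.rpow_neg hc.le, hNsplit]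
      have hcp : (0:ℝ) < c ^ ((n:ℝ)/2) := by positivity
      field_simp
    linarith [h12 ▸ h11]
  -- lower bound
  set L' : ℕ := ⌊(N/(2*C)) ^ ((n:ℝ)/2)⌋₊ with hL'
  set M' : ℕ := ⌊Real.sqrt (N/2) * R / C⌋₊ with hM'
  have h1' : (1:ℝ) ≤ (N/(2*C)) ^ ((n:ℝ)/2) :=
    Real.one_le_rpow (by rw [le_div_iff₀ (by positivity)]; linarith) (by positivity)
  have h2' : (1:ℝ) ≤ Real.sqrt (N/2) * R / C := by
    have hN3' : C^2 / R^2 ≤ N / 2 := by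
      have h := hN3
      rw [div_le_iff₀ (by positivity)] at h
      rw [div_le_div_iff₀ (by positivity) (by norm_num)]
      nlinarith
    have hCR : C/R ≤ Real.sqrt (N/2) := by
      rw [show C/R = Real.sqrt ((C/R)^2) from (Real.sqrt_sq (by positivity)).symm]
      apply Real.sqrt_le_sqrt
      rw [div_pow]
      linarith
    rw [le_div_iff₀ hC, one_mul, ← div_le_iff₀ hR]
    exact hCR
  have hsub' : ↑(Finset.Icc 1 L' ×ˢ Finset.Icc 1 M') ⊆ S := by
    rintro ⟨l, m⟩ hp
    simp only [Finset.coe_product, Set.mem_prod, Finset.mem_coe, Finset.mem_Icc] at hp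
    obtain ⟨⟨hl1, hl2⟩, hm1, hm2⟩ := hp
    refine ⟨hl1, hm1, ?_⟩
    have hμl := (hμ l hl1).2
    have hjm := (hj m hm1).2
    have hlle : (l:ℝ) ≤ (N/(2*C)) ^ ((n:ℝ)/2) :=
      le_trans (by exact_mod_cast hl2) (Nat.floor_le (by positivity))
    have hmle : (m:ℝ) ≤ Real.sqrt (N/2) * R / C :=
      le_trans (by exact_mod_cast hm2) (Nat.floor_le (by positivity))
    have hμN : μ l ≤ N/2 := by
      have h13 : (l:ℝ) ^ ((2:ℝ)/n) ≤ ((N/(2*C)) ^ ((n:ℝ)/2)) ^ ((2:ℝ)/n) :=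
        Real.rpow_le_rpow (Nat.cast_nonneg l) hlle (by positivity)
      rw [← Real.rpow_mul (by positivity), hexp', Real.rpow_one] at h13
      calc μ l ≤ C * (l:ℝ) ^ ((2:ℝ)/n) := hμl
        _ ≤ C * (N/(2*C)) := by nlinarith
        _ = N/2 := by field_simp
    have hjN : (j m)^2 / R^2 ≤ N/2 := by
      have hjm' : j m ≤ Real.sqrt (N/2) * R := by
        calc j m ≤ C * (m:ℝ) := hjm
          _ ≤ C * (Real.sqrt (N/2) * R / C) := by nlinarith
          _ = Real.sqrt (N/2) * R := by field_simp
      have hjnn : (0:ℝ) ≤ j m := by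
        have h14 := (hj m hm1).1
        have : (1:ℝ) ≤ (m:ℝ) := by exact_mod_cast hm1
        nlinarith
      have h15 : (j m)^2 ≤ (N/2) * R^2 := by
        have := pow_le_pow_left₀ hjnn hjm' 2
        rw [mul_pow, Real.sq_sqrt (by linarith : (0:ℝ) ≤ N/2)] at this
        linarith
      rw [div_le_iff₀ (by positivity)]
      linarith
    show μ l + (j m)^2 / R^2 ≤ N
    linarith
  have hcardL : L' * M' ≤ Nat.card S := by
    rw [Nat.card_coe_set_eq]
    calc L' * M' = ((Finset.Icc 1 L' ×ˢ Finset.Icc 1 M' : Finset (ℕ×ℕ)) : Set (ℕ×ℕ)).ncard := by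
          rw [Set.ncard_coe_finset, Finset.card_product, Nat.card_Icc, Nat.card_Icc]; simp
      _ ≤ S.ncard := Set.ncard_le_ncard hsub' hSfin
  have hlower : ((2*C) ^ (-((n:ℝ)/2)) * (2:ℝ) ^ (-(1/2 : ℝ)) / (4*C)) * R * N ^ (((n : ℝ) + 1) / 2)
      ≤ (Nat.card S : ℝ) := by
    have h8 : (L':ℝ) * (M':ℝ) ≤ (Nat.card S : ℝ) := by exact_mod_cast hcardL
    have h9 : (N/(2*C)) ^ ((n:ℝ)/2) / 2 ≤ (L':ℝ) := half_le_floor h1'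
    have h10 : (Real.sqrt (N/2) * R / C) / 2 ≤ (M':ℝ) := half_le_floor h2'
    have h11 : ((N/(2*C)) ^ ((n:ℝ)/2) / 2) * ((Real.sqrt (N/2) * R / C) / 2)
        ≤ (L':ℝ) * (M':ℝ) :=
      mul_le_mul h9 h10 (by positivity) (by positivity)
    have h12 : ((N/(2*C)) ^ ((n:ℝ)/2) / 2) * ((Real.sqrt (N/2) * R / C) / 2)
        = ((2*C) ^ (-((n:ℝ)/2)) * (2:ℝ) ^ (-(1/2 : ℝ)) / (4*C)) * R * N ^ (((n : ℝ) + 1) / 2) := by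
      rw [Real.sqrt_eq_rpow, Real.div_rpow hN0.le (by positivity), hNsplit,
        Real.div_rpow hN0.le (by norm_num), Real.rpow_neg (by positivity), Real.rpow_neg (by norm_num)]
      have hq1 : (0:ℝ) < (2*C) ^ ((n:ℝ)/2) := by positivity
      have hq2 : (0:ℝ) < (2:ℝ) ^ ((1:ℝ)/2) := by positivity
      field_simp
      ring
    linarith [h12 ▸ h11]
  exact ⟨hlower, hupper⟩

set_option maxHeartbeats 1000000 in
lemma rearrangement (n : ℕ) (hn : 1 ≤ n) (c₁ C₁ R N₀ : ℝ)
    (hc₁ : 0 < c₁) (hC₁ : 0 < C₁) (hR : 0 < R) (hN₀ : 1 ≤ N₀)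
    (F : ℝ → ℕ)
    (hF : ∀ N, N₀ ≤ N → c₁ * R * N ^ (((n:ℝ)+1)/2) ≤ (F N : ℝ)
        ∧ (F N : ℝ) ≤ C₁ * R * N ^ (((n:ℝ)+1)/2))
    (lam : ℕ → ℝ) (hlam : Monotone lam)
    (hcnt : ∀ N : ℝ, Nat.card {k : ℕ | 1 ≤ k ∧ lam k ≤ N} = F N) :
    ∃ k₀ : ℕ, ∀ k : ℕ, k₀ ≤ k →
      (2*C₁) ^ (-(2:ℝ)/((n:ℝ)+1)) * R ^ (-(2:ℝ)/((n:ℝ)+1)) * (k:ℝ) ^ ((2:ℝ)/((n:ℝ)+1)) ≤ lam k ∧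
      lam k ≤ c₁ ^ (-(2:ℝ)/((n:ℝ)+1)) * R ^ (-(2:ℝ)/((n:ℝ)+1)) * (k:ℝ) ^ ((2:ℝ)/((n:ℝ)+1)) := by
  set α : ℝ := ((n:ℝ)+1)/2 with hα
  set e : ℝ := (2:ℝ)/((n:ℝ)+1) with he
  have hn1 : (0:ℝ) < (n:ℝ) + 1 := by positivity
  have he0 : 0 < e := by positivity
  have hα0 : 0 < α := by positivity
  have heα : e * α = 1 := by rw [he, hα]; field_simp
  have hαe : α * e = 1 := by rw [he, hα]; field_simp
  refine ⟨⌈c₁ * R * N₀ ^ α⌉₊ + ⌈2*C₁*R*N₀^α⌉₊ + ⌈2*C₁/c₁⌉₊ + 1, ?_⟩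
  intro k hk
  have hk1 : 1 ≤ k := le_trans (by omega) hk
  have hk0 : (0:ℝ) < (k:ℝ) := by exact_mod_cast hk1
  have hget : ∀ x : ℝ, ⌈x⌉₊ ≤ k → x ≤ (k:ℝ) := fun x hx =>
    le_trans (Nat.le_ceil x) (by exact_mod_cast hx)
  have hka : c₁ * R * N₀ ^ α ≤ (k:ℝ) := hget _ (by omega)
  have hkb : 2*C₁*R*N₀^α ≤ (k:ℝ) := hget _ (by omega)
  have hkc : 2*C₁/c₁ ≤ (k:ℝ) := hget _ (by omega)
  -- upper bound
  have hupper : lam k ≤ c₁ ^ (-e) * R ^ (-e) * (k:ℝ) ^ e := by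
    set Nup : ℝ := ((k:ℝ)/(c₁*R)) ^ e with hNup
    have hb0 : (0:ℝ) < (k:ℝ)/(c₁*R) := by positivity
    have hNupα : Nup ^ α = (k:ℝ)/(c₁*R) := by
      rw [hNup, ← Real.rpow_mul hb0.le, heα, Real.rpow_one]
    have hNupN₀ : N₀ ≤ Nup := by
      have h1 : N₀ ^ α ≤ (k:ℝ)/(c₁*R) := by
        rw [le_div_iff₀ (by positivity)]; linarith [hka]
      calc N₀ = (N₀ ^ α) ^ e := by
            rw [← Real.rpow_mul (by linarith), hαe, Real.rpow_one]
        _ ≤ ((k:ℝ)/(c₁*R)) ^ e := Real.rpow_le_rpow (by positivity) h1 he0.le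
    have hFk : (k:ℝ) ≤ (F Nup : ℝ) := by
      have := (hF Nup hNupN₀).1
      rw [hNupα] at this
      have heq : c₁ * R * ((k:ℝ)/(c₁*R)) = (k:ℝ) := by field_simp
      linarith [heq ▸ this]
    have hFk' : k ≤ F Nup := by exact_mod_cast hFk
    -- find element ≥ k in the set
    have hex : ∃ k'' : ℕ, (1 ≤ k'' ∧ lam k'' ≤ Nup) ∧ k ≤ k'' := by
      by_contra hcon
      push_neg at hcon
      have hsub : {k' : ℕ | 1 ≤ k' ∧ lam k' ≤ Nup} ⊆ ↑(Finset.Ico 1 k) := by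
        intro k' hk'
        simp only [Finset.coe_Ico, Set.mem_Ico]
        exact ⟨hk'.1, hcon k' hk'⟩
      have hle : Nat.card {k' : ℕ | 1 ≤ k' ∧ lam k' ≤ Nup} ≤ k - 1 := by
        rw [Nat.card_coe_set_eq]
        calc _ ≤ ((Finset.Ico 1 k : Finset ℕ) : Set ℕ).ncard :=
              Set.ncard_le_ncard hsub (Finset.finite_toSet _)
          _ = k - 1 := by rw [Set.ncard_coe_finset, Nat.card_Ico]
      rw [hcnt] at hle
      omega
    obtain ⟨k'', ⟨_, hlk''⟩, hkk''⟩ := hex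
    have : lam k ≤ lam k'' := hlam hkk''
    have hNupeq : Nup = c₁ ^ (-e) * R ^ (-e) * (k:ℝ) ^ e := by
      rw [hNup, Real.div_rpow hk0.le (by positivity), Real.mul_rpow hc₁.le hR.le,
        Real.rpow_neg hc₁.le, Real.rpow_neg hR.le]
      field_simp
    linarith [hNupeq ▸ hlk'']
  -- lower bound
  have hlower : (2*C₁) ^ (-e) * R ^ (-e) * (k:ℝ) ^ e ≤ lam k := by
    set Nlo : ℝ := ((k:ℝ)/(2*C₁*R)) ^ e with hNlo
    have hb0 : (0:ℝ) < (k:ℝ)/(2*C₁*R) := by positivity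
    have hNloα : Nlo ^ α = (k:ℝ)/(2*C₁*R) := by
      rw [hNlo, ← Real.rpow_mul hb0.le, heα, Real.rpow_one]
    have hNloN₀ : N₀ ≤ Nlo := by
      have h1 : N₀ ^ α ≤ (k:ℝ)/(2*C₁*R) := by
        rw [le_div_iff₀ (by positivity)]; linarith [hkb]
      calc N₀ = (N₀ ^ α) ^ e := by
            rw [← Real.rpow_mul (by linarith), hαe, Real.rpow_one]
        _ ≤ ((k:ℝ)/(2*C₁*R)) ^ e := Real.rpow_le_rpow (by positivity) h1 he0.le
    obtain ⟨hFlo1, hFlo2⟩ := hF Nlo hNloN₀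
    rw [hNloα] at hFlo1 hFlo2
    have hFhalf : (F Nlo : ℝ) ≤ (k:ℝ)/2 := by
      have heq : C₁ * R * ((k:ℝ)/(2*C₁*R)) = (k:ℝ)/2 := by field_simp
      linarith [heq ▸ hFlo2]
    have hFpos : 1 ≤ F Nlo := by
      have heq : c₁ * R * ((k:ℝ)/(2*C₁*R)) = c₁ * (k:ℝ)/(2*C₁) := by field_simp
      have h2 : (1:ℝ) ≤ c₁ * (k:ℝ)/(2*C₁) := by
        rw [le_div_iff₀ (by positivity)]
        rw [div_le_iff₀ hc₁] at hkc
        nlinarith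
      have : (1:ℝ) ≤ (F Nlo : ℝ) := by linarith [heq ▸ hFlo1]
      exact_mod_cast this
    have hnot : ¬ (lam k ≤ Nlo) := by
      intro hle
      have hsub : ↑(Finset.Icc 1 k) ⊆ {k' : ℕ | 1 ≤ k' ∧ lam k' ≤ Nlo} := by
        intro k' hk'
        simp only [Finset.coe_Icc, Set.mem_Icc] at hk'
        exact ⟨hk'.1, le_trans (hlam hk'.2) hle⟩
      by_cases hfin : {k' : ℕ | 1 ≤ k' ∧ lam k' ≤ Nlo}.Finite
      · have hge : k ≤ Nat.card {k' : ℕ | 1 ≤ k' ∧ lam k' ≤ Nlo} := by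
          rw [Nat.card_coe_set_eq]
          calc k = ((Finset.Icc 1 k : Finset ℕ) : Set ℕ).ncard := by
                rw [Set.ncard_coe_finset, Nat.card_Icc]; omega
            _ ≤ _ := Set.ncard_le_ncard hsub hfin
        rw [hcnt] at hge
        have : (k:ℝ) ≤ (F Nlo : ℝ) := by exact_mod_cast hge
        linarith
      · have : Nat.card {k' : ℕ | 1 ≤ k' ∧ lam k' ≤ Nlo} = 0 := by
          rw [Nat.card_coe_set_eq]
          exact Set.Infinite.ncard hfin
        rw [hcnt] at this
        omega
    push_neg at hnot
    have hNloeq : Nlo = (2*C₁) ^ (-e) * R ^ (-e) * (k:ℝ) ^ e := by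
      rw [hNlo, Real.div_rpow hk0.le (by positivity),
        Real.mul_rpow (by positivity) hR.le,
        Real.rpow_neg (by positivity), Real.rpow_neg hR.le]
      field_simp
    linarith [hNloeq ▸ hnot]
  rw [show (-(2:ℝ)/((n:ℝ)+1)) = -e from by rw [he]; ring]
  exact ⟨hlower, hupper⟩

/-- Weyl-type counting for the eigenvalues `λ_{l,m} = μ_l + j_m²/R²` where `μ_l ~ l^{2/n}`
and `j_m ~ m`: the number of pairs `(l,m)` with `λ_{l,m} ≤ N` is comparable to
`R N^{(n+1)/2}` for `N` large, and consequently the nondecreasing rearrangement `λ_k`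
(characterized by having the same counting function) satisfies
`λ_k ~ R^{-2/(n+1)} k^{2/(n+1)}`, with all comparability constants independent of `R, N, k`. -/
theorem weyl_counting_and_rearrangement
    (n : ℕ) (hn : 1 ≤ n) (c C : ℝ) (hc : 0 < c) (hC : 0 < C) :
    ∃ c' C' : ℝ, 0 < c' ∧ 0 < C' ∧
      ∀ R > (0 : ℝ), ∀ μ j : ℕ → ℝ,
        StrictMono μ → StrictMono j →
        (∀ l : ℕ, 1 ≤ l → c * (l : ℝ) ^ ((2 : ℝ) / n) ≤ μ l ∧ μ l ≤ C * (l : ℝ) ^ ((2 : ℝ) / n)) →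
        (∀ m : ℕ, 1 ≤ m → c * (m : ℝ) ≤ j m ∧ j m ≤ C * (m : ℝ)) →
        (∃ N₀ : ℝ, ∀ N : ℝ, N₀ ≤ N →
          c' * R * N ^ (((n : ℝ) + 1) / 2)
              ≤ (Nat.card {p : ℕ × ℕ | 1 ≤ p.1 ∧ 1 ≤ p.2 ∧ μ p.1 + (j p.2) ^ 2 / R ^ 2 ≤ N} : ℝ) ∧
            (Nat.card {p : ℕ × ℕ | 1 ≤ p.1 ∧ 1 ≤ p.2 ∧ μ p.1 + (j p.2) ^ 2 / R ^ 2 ≤ N} : ℝ)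
              ≤ C' * R * N ^ (((n : ℝ) + 1) / 2)) ∧
        (∀ lam : ℕ → ℝ, Monotone lam →
          (∀ N : ℝ, Nat.card {k : ℕ | 1 ≤ k ∧ lam k ≤ N}
              = Nat.card {p : ℕ × ℕ | 1 ≤ p.1 ∧ 1 ≤ p.2 ∧ μ p.1 + (j p.2) ^ 2 / R ^ 2 ≤ N}) →
          ∃ k₀ : ℕ, ∀ k : ℕ, k₀ ≤ k →
            c' * R ^ (-(2 : ℝ) / ((n : ℝ) + 1)) * (k : ℝ) ^ ((2 : ℝ) / ((n : ℝ) + 1)) ≤ lam k ∧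
            lam k ≤ C' * R ^ (-(2 : ℝ) / ((n : ℝ) + 1)) * (k : ℝ) ^ ((2 : ℝ) / ((n : ℝ) + 1))) := by
  have hc₁ : 0 < (2*C) ^ (-((n:ℝ)/2)) * (2:ℝ) ^ (-(1/2 : ℝ)) / (4*C) := by positivity
  have hC₁ : 0 < c ^ (-((n:ℝ)/2)) / c := by positivity
  refine ⟨min ((2*C) ^ (-((n:ℝ)/2)) * (2:ℝ) ^ (-(1/2 : ℝ)) / (4*C))
      ((2*(c ^ (-((n:ℝ)/2)) / c)) ^ (-(2:ℝ)/((n:ℝ)+1))),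
    max (c ^ (-((n:ℝ)/2)) / c)
      (((2*C) ^ (-((n:ℝ)/2)) * (2:ℝ) ^ (-(1/2 : ℝ)) / (4*C)) ^ (-(2:ℝ)/((n:ℝ)+1))),
    lt_min hc₁ (by positivity), lt_of_lt_of_le hC₁ (le_max_left _ _), ?_⟩
  intro R hR μ j hμm hjm hμ hj
  constructor
  · refine ⟨max 1 (max (2*C) (2*C^2/R^2)), fun N hN => ?_⟩
    obtain ⟨hlo, hup⟩ := count_bounds n hn c C hc hC R hR μ j hμ hj N hN
    have hNpos : (0:ℝ) < N := lt_of_lt_of_le one_pos (le_trans (le_max_left _ _) hN)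
    constructor
    · refine le_trans ?_ hlo
      exact mul_le_mul_of_nonneg_right
        (mul_le_mul_of_nonneg_right (min_le_left _ _) hR.le) (by positivity)
    · refine le_trans hup ?_
      exact mul_le_mul_of_nonneg_right
        (mul_le_mul_of_nonneg_right (le_max_left _ _) hR.le) (by positivity)
  · intro lam hlam hcnt
    obtain ⟨k₀, hk₀⟩ := rearrangement n hn
      ((2*C) ^ (-((n:ℝ)/2)) * (2:ℝ) ^ (-(1/2 : ℝ)) / (4*C)) (c ^ (-((n:ℝ)/2)) / c)
      R (max 1 (max (2*C) (2*C^2/R^2))) hc₁ hC₁ hR (le_max_left _ _)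
      (fun N => Nat.card {p : ℕ × ℕ | 1 ≤ p.1 ∧ 1 ≤ p.2 ∧ μ p.1 + (j p.2) ^ 2 / R ^ 2 ≤ N})
      (fun N hN => count_bounds n hn c C hc hC R hR μ j hμ hj N hN) lam hlam hcnt
    refine ⟨k₀, fun k hk => ?_⟩
    obtain ⟨h1, h2⟩ := hk₀ k hk
    constructor
    · refine le_trans ?_ h1
      exact mul_le_mul_of_nonneg_right
        (mul_le_mul_of_nonneg_right (min_le_right _ _) (by positivity)) (by positivity)
    · refine le_trans h2 ?_
      exact mul_le_mul_of_nonneg_right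
        (mul_le_mul_of_nonneg_right (le_max_right _ _) (by positivity)) (by positivity)
end
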